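/- arXiv:1804.05371 — 5 statements merged into one kernel-verified Lean document; each statement's English description precedes it below -/
import Mathlib

section
/- For vectors a,b of length n and c,d of length m over an alphabet of size q, the edit distance satisfies d_E(ac, bd) ≥ max{d_E(a,b), d_E(c,d)}, where ac denotes concatenation of a and c. -/
/-- A single edit step: insert or delete one symbol. -/
def EditStep {α : Type*} (a b : List α) : Prop :=
  (∃ i x, b = a.insertIdx i x) ∨ (∃ i x, a = b.insertIdx i x)

/-- Edit distance: minimum number of insertions and deletions transforming `a` into `b`. -/
noncomputable def editDist {α : Type*} (a b : List α) : ℕ :=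
  sInf {n : ℕ | ∃ f : ℕ → List α, f 0 = a ∧ f n = b ∧ ∀ i < n, EditStep (f i) (f (i + 1))}

/-!
An edit path from `a ++ c` to `b ++ d` splits at the boundary, since every step edits either the
left or the right part: `b ++ d = u ++ v` with `d(a, u) + d(c, v) ≤ d(a ++ c, b ++ d)`. As `u` and
`b` are both prefixes of `b ++ d`, one extends the other, so
`d(u, b) = ||u| - |b|| = ||v| - |d|| = ||v| - |c|| ≤ d(c, v)`, and the triangle inequality gives
`d(a, b) ≤ d(a, u) + d(c, v)`. The bound for `d(c, d)` is symmetric, via suffixes.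
-/

variable {α : Type*}

-- `insertIdx` at an index past the end of the list leaves it unchanged.
theorem List.insertIdx_eq_append_cons_or_eq (l : List α) (i : ℕ) (x : α) :
    (∃ p s, l = p ++ s ∧ l.insertIdx i x = p ++ x :: s) ∨ l.insertIdx i x = l := by
  induction l generalizing i with
  | nil => cases i <;> simp
  | cons y l ih =>
    cases i with
    | zero => exact Or.inl ⟨[], y :: l, rfl, rfl⟩
    | succ i =>
      rcases ih i with ⟨p, s, rfl, h⟩ | h
      · exact Or.inl ⟨y :: p, s, rfl, by simp [h]⟩
      · exact Or.inr (by simp [h])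

theorem EditStep.symm {a b : List α} (h : EditStep a b) : EditStep b a := Or.symm h

theorem editStep_append_cons (p s : List α) (x : α) : EditStep (p ++ s) (p ++ x :: s) := by
  refine Or.inl ⟨p.length, x, ?_⟩
  induction p with
  | nil => simp
  | cons y p ih => simp [ih]

theorem EditStep.cons (x : α) {a b : List α} (h : EditStep a b) : EditStep (x :: a) (x :: b) := by
  rcases h with ⟨i, y, rfl⟩ | ⟨i, y, rfl⟩
  · exact Or.inl ⟨i + 1, y, List.insertIdx_succ_cons.symm⟩
  · exact Or.inr ⟨i + 1, y, List.insertIdx_succ_cons.symm⟩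

theorem EditStep.length_le {a b : List α} (h : EditStep a b) : b.length ≤ a.length + 1 := by
  rcases h with ⟨i, x, rfl⟩ | ⟨i, x, rfl⟩
  · exact List.length_insertIdx_le_succ
  · exact List.length_le_length_insertIdx.trans (Nat.le_succ _)

theorem EditStep.eq_or_exists_append_cons {a b : List α} (h : EditStep a b) :
    a = b ∨ (∃ p s x, a = p ++ s ∧ b = p ++ x :: s) ∨ (∃ p s x, a = p ++ x :: s ∧ b = p ++ s) := by
  rcases h with ⟨i, x, rfl⟩ | ⟨i, x, rfl⟩
  · rcases a.insertIdx_eq_append_cons_or_eq i x with ⟨p, s, ha, hb⟩ | h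
    · exact Or.inr (Or.inl ⟨p, s, x, ha, hb⟩)
    · exact Or.inl h.symm
  · rcases b.insertIdx_eq_append_cons_or_eq i x with ⟨p, s, hb, ha⟩ | h
    · exact Or.inr (Or.inr ⟨p, s, x, ha, hb⟩)
    · exact Or.inl h

inductive EditPath : ℕ → List α → List α → Prop
  | refl (a : List α) : EditPath 0 a a
  | tail {n : ℕ} {a b c : List α} : EditPath n a b → EditStep b c → EditPath (n + 1) a c

namespace EditPath

variable {m n : ℕ} {a b c : List α}

theorem single (h : EditStep a b) : EditPath 1 a b := (refl a).tail h

theorem trans (h₁ : EditPath m a b) (h₂ : EditPath n b c) : EditPath (m + n) a c := by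
  induction h₂ with
  | refl => exact h₁
  | tail _ hs ih => exact (ih h₁).tail hs

theorem symm (h : EditPath n a b) : EditPath n b a := by
  induction h with
  | refl a => exact refl a
  | tail _ hs ih => rw [Nat.add_comm]; exact (single hs.symm).trans ih

theorem cons (x : α) (h : EditPath n a b) : EditPath n (x :: a) (x :: b) := by
  induction h with
  | refl a => exact refl _
  | tail _ hs ih => exact ih.tail (hs.cons x)

theorem length_le (h : EditPath n a b) : b.length ≤ a.length + n := by
  induction h with
  | refl => omega
  | tail _ hs ih => have := hs.length_le; omega

end EditPath

theorem List.Sublist.editPath {l₁ l₂ : List α} (h : l₁.Sublist l₂) :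
    EditPath (l₂.length - l₁.length) l₁ l₂ := by
  induction h with
  | slnil => exact .refl []
  | cons x h ih =>
    rw [List.length_cons, Nat.sub_add_comm h.length_le]
    exact ih.tail (editStep_append_cons [] _ x)
  | cons_cons x _ ih => simpa using ih.cons x

theorem editPath_iff {n : ℕ} {a b : List α} :
    EditPath n a b ↔ ∃ f : ℕ → List α, f 0 = a ∧ f n = b ∧ ∀ i < n, EditStep (f i) (f (i + 1)) := by
  constructor
  · intro h
    induction h with
    | refl a => exact ⟨fun _ => a, rfl, rfl, fun i hi => absurd hi (Nat.not_lt_zero i)⟩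
    | @tail n a b c _ hs ih =>
      obtain ⟨f, h0, hn, hf⟩ := ih
      refine ⟨fun i => if i ≤ n then f i else c, by simp [h0], by simp, fun i hi => ?_⟩
      obtain hi | rfl := Nat.lt_succ_iff_lt_or_eq.mp hi
      · simpa [hi.le, Nat.succ_le_of_lt hi] using hf i hi
      · simpa [hn] using hs
  · rintro ⟨f, rfl, rfl, hf⟩
    induction n with
    | zero => exact .refl _
    | succ n ih => exact (ih fun i hi => hf i (by omega)).tail (hf n (by omega))

theorem editDist_eq_sInf (a b : List α) : editDist a b = sInf {n | EditPath n a b} := by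
  simp only [editDist, editPath_iff]

theorem EditPath.editDist_le {n : ℕ} {a b : List α} (h : EditPath n a b) : editDist a b ≤ n := by
  rw [editDist_eq_sInf]
  exact Nat.sInf_le h

theorem editPath_editDist (a b : List α) : EditPath (editDist a b) a b := by
  rw [editDist_eq_sInf]
  exact Nat.sInf_mem (s := {n | EditPath n a b})
    ⟨_, (List.nil_sublist a).editPath.symm.trans (List.nil_sublist b).editPath⟩

theorem editDist_self (a : List α) : editDist a a = 0 :=
  Nat.le_zero.mp (EditPath.refl a).editDist_le

theorem editDist_triangle (a b c : List α) : editDist a c ≤ editDist a b + editDist b c :=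
  ((editPath_editDist a b).trans (editPath_editDist b c)).editDist_le

theorem EditStep.editDist_le_one {a b : List α} (h : EditStep a b) : editDist a b ≤ 1 :=
  (EditPath.single h).editDist_le

theorem natAbs_length_sub_le_editDist (a b : List α) :
    ((a.length : ℤ) - b.length).natAbs ≤ editDist a b := by
  have h₁ := (editPath_editDist a b).length_le
  have h₂ := (editPath_editDist a b).symm.length_le
  omega

theorem editDist_le_natAbs_length_sub {l₁ l₂ : List α} (h : l₁.Sublist l₂ ∨ l₂.Sublist l₁) :
    editDist l₁ l₂ ≤ ((l₁.length : ℤ) - l₂.length).natAbs := by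
  rcases h with h | h
  · have := h.editPath.editDist_le; omega
  · have := h.editPath.symm.editDist_le; omega

theorem EditStep.exists_append_editDist_add_le_one {u v w : List α}
    (h : EditStep (u ++ v) w) :
    ∃ u' v', w = u' ++ v' ∧ editDist u u' + editDist v v' ≤ 1 := by
  have ins (p s : List α) (x : α) : editDist (p ++ s) (p ++ x :: s) ≤ 1 :=
    (editStep_append_cons p s x).editDist_le_one
  have del (p s : List α) (x : α) : editDist (p ++ x :: s) (p ++ s) ≤ 1 :=
    (editStep_append_cons p s x).symm.editDist_le_one
  rcases h.eq_or_exists_append_cons with rfl | ⟨p, s, x, huv, rfl⟩ | ⟨p, s, x, huv, rfl⟩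
  · exact ⟨u, v, rfl, by simp [editDist_self]⟩
  · rcases List.append_eq_append_iff.mp huv with ⟨t, rfl, rfl⟩ | ⟨t, rfl, rfl⟩
    · exact ⟨u, t ++ x :: s, by simp, by simpa [editDist_self] using ins t s x⟩
    · exact ⟨p ++ x :: t, v, by simp, by simpa [editDist_self] using ins p t x⟩
  · rcases List.append_eq_append_iff.mp huv with ⟨t, rfl, rfl⟩ | ⟨t, rfl, hxs⟩
    · exact ⟨u, t ++ s, by simp, by simpa [editDist_self] using del t s x⟩
    · rcases List.cons_eq_append_iff.mp hxs with ⟨rfl, rfl⟩ | ⟨t, rfl, rfl⟩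
      · exact ⟨p, s, by simp, by simpa [editDist_self] using del [] s x⟩
      · exact ⟨p ++ t, v, by simp, by simpa [editDist_self] using del p t x⟩

theorem EditPath.exists_append_editDist_add_le {n : ℕ} {u v w : List α}
    (h : EditPath n (u ++ v) w) :
    ∃ u' v', w = u' ++ v' ∧ editDist u u' + editDist v v' ≤ n := by
  generalize hw₀ : u ++ v = w₀ at h
  induction h with
  | refl => exact ⟨u, v, hw₀.symm, by simp [editDist_self]⟩
  | tail _ hs ih =>
    obtain ⟨u₁, v₁, rfl, h₁⟩ := ih hw₀
    obtain ⟨u₂, v₂, rfl, h₂⟩ := hs.exists_append_editDist_add_le_one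
    have := editDist_triangle u u₁ u₂
    have := editDist_triangle v v₁ v₂
    exact ⟨u₂, v₂, rfl, by omega⟩

/-- `d_E(ac, bd) ≥ max{d_E(a,b), d_E(c,d)}`. -/
theorem max_editDist_le_editDist_append (q n m : ℕ) (a b c d : List (Fin q))
    (ha : a.length = n) (hb : b.length = n) (hc : c.length = m) (hd : d.length = m) :
    max (editDist a b) (editDist c d) ≤ editDist (a ++ c) (b ++ d) := by
  obtain ⟨u, v, huv, hsplit⟩ :=
    (editPath_editDist (a ++ c) (b ++ d)).exists_append_editDist_add_le
  have hlen : u.length + v.length = b.length + d.length := by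
    rw [← List.length_append, ← List.length_append, huv]
  have hub := editDist_le_natAbs_length_sub <|
    (List.prefix_or_prefix_of_prefix (huv ▸ List.prefix_append u v) (List.prefix_append b d)).imp
      List.IsPrefix.sublist List.IsPrefix.sublist
  have hvd := editDist_le_natAbs_length_sub <|
    (List.suffix_or_suffix_of_suffix (huv ▸ List.suffix_append u v) (List.suffix_append b d)).imp
      List.IsSuffix.sublist List.IsSuffix.sublist
  have hau := natAbs_length_sub_le_editDist a u
  have hcv := natAbs_length_sub_le_editDist c v
  have hab := editDist_triangle a u b
  have hcd := editDist_triangle c v d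
  omega
end

section
/- Every balanced mutually uncorrelated code C ⊆ Σ_q^n (n even, q even) satisfies |C| ≤ binomial(n, n/2)·(q/2)^n / n. -/
/-!
If the rotation of a codeword `a` by `i` equals the rotation of a codeword `b` by `j ≠ i`,
then `a s = b (s + d)` with `d = j - i ≠ 0`, so the prefix of `a` of length `n - d` is the
suffix of `b` of that length; an MU code forbids this. Hence the `n` rotations of the
codewords are `n |C|` pairwise distinct words, all balanced. A balanced word is determined by
its set of `n/2` low positions together with its symbols folded into `{0, …, q/2 - 1}`, so
there are at most `binom(n, n/2) (q/2)^n` of them.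
-/

open Finset

def IsMutuallyUncorrelated {α : Type*} {n : ℕ} (C : Finset (Fin n → α)) : Prop :=
  ∀ a ∈ C, ∀ b ∈ C, ∀ i : ℕ, ∀ _ : 1 ≤ i, ∀ _ : i ≤ n - 1,
    (fun j : Fin i => a (Fin.castLE (by omega) j)) ≠
    (fun j : Fin i => b ⟨n - i + j.val, by have := j.isLt; omega⟩)

section CyclicShift

variable {α : Type*} {n : ℕ} [NeZero n]

def cyclicShift (a : Fin n → α) (i : Fin n) : Fin n → α := fun t => a (t + i)

theorem card_filter_cyclicShift (p : α → Prop) [DecidablePred p] (a : Fin n → α) (i : Fin n) :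
    #{t | p (cyclicShift a i t)} = #{t | p (a t)} :=
  card_equiv (Equiv.addRight i) fun t => by
    simp only [mem_filter, mem_univ, true_and, Equiv.coe_addRight]
    rfl

theorem IsMutuallyUncorrelated.injOn_cyclicShift {C : Finset (Fin n → α)}
    (hC : IsMutuallyUncorrelated C) :
    Set.InjOn (fun p : (Fin n → α) × Fin n => cyclicShift p.1 p.2)
      ↑(C ×ˢ (univ : Finset (Fin n))) := by
  rintro ⟨a, i⟩ ha ⟨b, j⟩ hb hab
  simp only [coe_product, coe_univ, Set.mem_prod, mem_coe, Set.mem_univ, and_true] at ha hb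
  have shift : ∀ s, a s = b (s + (j - i)) := fun s => by
    have h : a (s - i + i) = b (s - i + j) := congrFun hab (s - i)
    rwa [sub_add_cancel, show s - i + j = s + (j - i) by abel] at h
  by_cases hd : j - i = 0
  · obtain rfl : j = i := sub_eq_zero.mp hd
    obtain rfl : a = b := funext fun s => by simpa [hd] using shift s
    rfl
  · have hd' : (j - i).val ≠ 0 := fun h => hd (Fin.ext h)
    refine absurd ?_ (hC a ha b hb (n - (j - i).val) (by omega) (by omega))
    funext m
    rw [shift]
    congr 1
    ext
    simp only [Fin.val_add, Fin.val_castLE]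
    rw [Nat.mod_eq_of_lt (by omega)]
    omega

theorem IsMutuallyUncorrelated.card_mul_le {C B : Finset (Fin n → α)}
    (hC : IsMutuallyUncorrelated C) (hB : ∀ a ∈ C, ∀ i, cyclicShift a i ∈ B) :
    #C * n ≤ #B := by
  simpa [card_product] using card_le_card_of_injOn _
    (fun p hp => hB p.1 (mem_product.mp hp).1 p.2) hC.injOn_cyclicShift

end CyclicShift

section Balanced

variable {q k : ℕ}

def Fin.foldBelow (hqk : q ≤ 2 * k) (x : Fin q) : Fin k :=
  ⟨if x.val < k then x.val else x.val - k, by have := x.isLt; split_ifs <;> omega⟩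

theorem Fin.eq_of_foldBelow_eq {hqk : q ≤ 2 * k} {x y : Fin q} (hlow : x.val < k ↔ y.val < k)
    (h : Fin.foldBelow hqk x = Fin.foldBelow hqk y) : x = y := by
  have := x.isLt
  have := y.isLt
  simp only [Fin.foldBelow, Fin.mk.injEq] at h
  ext
  split_ifs at h <;> omega

theorem card_filter_card_filter_val_lt_le {ι : Type*} [Fintype ι] [DecidableEq ι]
    (hqk : q ≤ 2 * k) (r : ℕ) :
    #{a : ι → Fin q | #{i | (a i).val < k} = r} ≤
      (Fintype.card ι).choose r * k ^ Fintype.card ι := by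
  calc _ ≤ #(powersetCard r (univ : Finset ι) ×ˢ (univ : Finset (ι → Fin k))) := by
        refine card_le_card_of_injOn (fun a => (({i | (a i).val < k} : Finset ι),
          fun i => Fin.foldBelow hqk (a i))) (fun a ha => ?_) (fun a _ b _ hab => ?_)
        · simpa [mem_powersetCard_univ] using ha
        · simp only [Prod.mk.injEq, funext_iff] at hab
          exact funext fun i =>
            Fin.eq_of_foldBelow_eq (by simpa using Finset.ext_iff.mp hab.1 i) (hab.2 i)
    _ = _ := by simp [card_product, card_powersetCard]

end Balanced

/-- every balanced MU code `C ⊆ Σ_q^n` (with `n` and `q` even) satisfies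
`|C| ≤ C(n, n/2) (q/2)^n / n`. -/
theorem balanced_MU_upper_bound (n q : ℕ) (hn : 0 < n)
    (hqe : Even q) (C : Finset (Fin n → Fin q))
    (hbal : ∀ a ∈ C,
      (Finset.univ.filter (fun i : Fin n => (a i).val < q / 2)).card = n / 2)
    (hmu : ∀ a ∈ C, ∀ b ∈ C, ∀ i : ℕ, ∀ h1 : 1 ≤ i, ∀ h2 : i ≤ n - 1,
      (fun j : Fin i => a (Fin.castLE (by omega) j)) ≠
      (fun j : Fin i => b ⟨n - i + j.val, by have := j.isLt; omega⟩)) :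
    C.card ≤ n.choose (n / 2) * (q / 2) ^ n / n := by
  have : NeZero n := ⟨hn.ne'⟩
  have hq : q ≤ 2 * (q / 2) := by obtain ⟨m, rfl⟩ := hqe; omega
  rw [Nat.le_div_iff_mul_le hn]
  calc #C * n ≤ #{a : Fin n → Fin q | #{i | (a i).val < q / 2} = n / 2} :=
        IsMutuallyUncorrelated.card_mul_le hmu fun a ha i => by
          simpa [card_filter_cyclicShift (fun x : Fin q => x.val < q / 2)] using hbal a ha
    _ ≤ n.choose (n / 2) * (q / 2) ^ n := by
        simpa using card_filter_card_filter_val_lt_le (ι := Fin n) hq (n / 2)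
end

section
/- For every n ≥ 2 and every k with 1 ≤ k < n, the code C_1(n,q,k) = {a ∈ Σ_q^n : a_1 = ... = a_k = 0, a_{k+1} ≠ 0, a_n ≠ 0, and the subvector (a_{k+2},...,a_{n−1}) has no zeros run of length k} is a mutually uncorrelated code. -/
/-- Membership in the Gilbert–Levenshtein code `C_1(n,q,k)`: the first `k` symbols are zero,
the `(k+1)`-st and last symbols are nonzero, and the subvector `(a_{k+2},…,a_{n-1})`
(0-based positions `k+1,…,n-2`) has no zeros run of length `k`. -/
def C1Mem (q n k : ℕ) (a : Fin n → Fin q) : Prop :=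
  (∀ i : Fin n, i.val < k → (a i).val = 0) ∧
  (∀ i : Fin n, i.val = k → (a i).val ≠ 0) ∧
  (∀ i : Fin n, i.val = n - 1 → (a i).val ≠ 0) ∧
  ¬ ∃ s : ℕ, k + 1 ≤ s ∧ s + k ≤ n - 1 ∧
      ∀ j : Fin n, s ≤ j.val → j.val < s + k → (a j).val = 0

/-- `C_1(n,q,k)` is a mutually uncorrelated code: no non-trivial prefix of a
codeword equals a non-trivial suffix of a (not necessarily distinct) codeword. -/
theorem C1_is_MU (q n k : ℕ) (hn : 2 ≤ n) (hk1 : 1 ≤ k) (hk2 : k < n)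
    (a b : Fin n → Fin q) (ha : C1Mem q n k a) (hb : C1Mem q n k b)
    (i : ℕ) (h1 : 1 ≤ i) (h2 : i ≤ n - 1) :
    (fun j : Fin i => a (Fin.castLE (by omega) j)) ≠
    (fun j : Fin i => b ⟨n - i + j.val, by have := j.isLt; omega⟩) := by
  intro heq
  obtain ⟨ha0, hak, han, harun⟩ := ha
  obtain ⟨hb0, hbk, hbn, hbrun⟩ := hb
  have key : ∀ j : Fin i,
      (a (Fin.castLE (by omega) j)).val
        = (b ⟨n - i + j.val, by have := j.isLt; omega⟩).val :=
    fun j => congrArg Fin.val (congrFun heq j)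
  by_cases hik : i ≤ k
  · -- last element of prefix is a zero, but last element of suffix is b at n-1, nonzero
    have h := key ⟨i - 1, by omega⟩
    have hz : (a (Fin.castLE (by omega) (⟨i - 1, by omega⟩ : Fin i))).val = 0 :=
      ha0 _ (by simp [Fin.castLE]; omega)
    have hnz := hbn ⟨n - i + (i - 1), by omega⟩ (by simp; omega)
    exact hnz (h ▸ hz)
  · push_neg at hik
    by_cases hsk : n - i ≤ k
    · -- b[k] = a[k - (n-i)] = 0, contradiction
      have h := key ⟨k - (n - i), by omega⟩
      have hz : (a (Fin.castLE (by omega) (⟨k - (n - i), by omega⟩ : Fin i))).val = 0 :=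
        ha0 _ (by simp [Fin.castLE]; omega)
      have hnz := hbk ⟨n - i + (k - (n - i)), by omega⟩ (by simp; omega)
      exact hnz (h ▸ hz)
    · apply hbrun
      refine ⟨n - i, by omega, by omega, fun j hj1 hj2 => ?_⟩
      have h := key ⟨j.val - (n - i), by omega⟩
      have hz : (a (Fin.castLE (by omega) (⟨j.val - (n - i), by omega⟩ : Fin i))).val = 0 :=
        ha0 _ (by simp [Fin.castLE]; omega)
      have hje : (⟨n - i + (j.val - (n - i)), by omega⟩ : Fin n) = j :=
        Fin.ext (by simp; omega)
      rw [h, hje] at hz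
      exact hz
end

section
/- The vector u = 1^d u_0 u_1 ... u_{⌈log d⌉−1} of length ℓ(d) = d⌈log d⌉ + d, where u_i is the length-d prefix of the periodic vector (1^{2^i} 0^{2^i})^d, is a d-auto-cyclic vector: for every 1 ≤ i ≤ d, d_H(u, 0^i u_1^{ℓ(d)−i}) ≥ d. -/
/-- The length `ℓ(d) = d⌈log d⌉ + d` of the auto-cyclic vector. -/
def autoCyclicLen (d : ℕ) : ℕ := d * Nat.clog 2 d + d

/-- The vector `u = 1^d u_0 ⋯ u_{⌈log d⌉−1}` where `u_i` is the length-`d` prefix of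
`(1^{2^i} 0^{2^i})^d` (bit `j` of `u_i` is `1` iff `⌊j/2^i⌋` is even). -/
def autoCyclicVec (d : ℕ) : List Bool :=
  List.replicate d true ++
    (List.range (Nat.clog 2 d)).flatMap
      (fun i => List.ofFn (fun j : Fin d => decide (j.val / 2 ^ i % 2 = 0)))

/-- Hamming distance of two boolean lists (number of mismatching aligned positions). -/
def listHammingDist (x y : List Bool) : ℕ :=
  (x.zip y).countP (fun p => p.1 != p.2)

/-! Shifting `u` right by `i` turns its leading `i` ones into zeros: `i` mismatches. For the other
`d - i`, write `i = 2^k m` with `m` odd. If `i < d` then `2^k < d ≤ 2^⌈log d⌉`, so the block `u_k`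
exists, and the shift moves bit `j - i` of `u_k` onto bit `j ≥ i`; since
`⌊(j - i)/2^k⌋ = ⌊j/2^k⌋ - m` with `m` odd, the two bits differ. -/

open Finset

theorem List.card_le_countP {α : Type*} {l : List α} {f : α → Bool} {S : Finset ℕ}
    (h : ∀ p ∈ S, ∃ a, l[p]? = some a ∧ f a) : #S ≤ l.countP f := by
  have hcount : l.countP f = #{p : Fin l.length | f l[p]} := by
    conv_lhs => rw [← List.map_getElem_finRange l]
    rw [List.countP_map, ← List.toFinset_finRange,
      List.Nodup.card_eq_countP (List.nodup_finRange _)]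
    simp only [Function.comp_def, Bool.decide_eq_true]
    rfl
  rw [hcount, ← card_map Fin.valEmbedding]
  refine card_le_card fun p hp => ?_
  obtain ⟨a, hpa, hfa⟩ := h p hp
  obtain ⟨hp, rfl⟩ := List.getElem?_eq_some_iff.mp hpa
  exact mem_map.mpr ⟨⟨p, hp⟩, by simpa using hfa, rfl⟩

theorem card_le_listHammingDist {x y : List Bool} {S : Finset ℕ}
    (h : ∀ p ∈ S, ∃ a, x[p]? = some a ∧ y[p]? = some !a) : #S ≤ listHammingDist x y :=
  List.card_le_countP fun p hp => by
    obtain ⟨a, hx, hy⟩ := h p hp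
    exact ⟨(a, !a), by simp [List.getElem?_zip_eq_some, hx, hy], by simp⟩

section FlatMap

variable {α : Type*} {d : ℕ} {g : ℕ → List α}

theorem List.length_flatMap_range_of_length_eq (hg : ∀ k, (g k).length = d) (c : ℕ) :
    ((List.range c).flatMap g).length = c * d := by
  simp [List.length_flatMap, hg]

theorem List.getElem?_flatMap_range_of_length_eq (hg : ∀ k, (g k).length = d) {c k j : ℕ}
    (hk : k < c) (hj : j < d) : ((List.range c).flatMap g)[k * d + j]? = (g k)[j]? := by
  induction c with
  | zero => omega
  | succ c ih =>
    rw [List.range_succ, List.flatMap_append]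
    rcases Nat.lt_or_ge k c with hkc | hkc
    · rw [List.getElem?_append_left, ih hkc]
      rw [List.length_flatMap_range_of_length_eq hg]
      nlinarith
    · obtain rfl : k = c := by omega
      rw [List.getElem?_append_right, List.length_flatMap_range_of_length_eq hg] <;>
        simp [List.length_flatMap_range_of_length_eq hg]

end FlatMap

theorem autoCyclicVec_length (d : ℕ) : (autoCyclicVec d).length = autoCyclicLen d := by
  simp [autoCyclicVec, autoCyclicLen, List.length_flatMap, add_comm, mul_comm]

theorem autoCyclicVec_getElem?_of_lt {d p : ℕ} (hp : p < d) :
    (autoCyclicVec d)[p]? = some true := by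
  simp [autoCyclicVec, List.getElem?_append_left, hp]

theorem autoCyclicVec_getElem?_block {d k j : ℕ} (hk : k < Nat.clog 2 d) (hj : j < d) :
    (autoCyclicVec d)[d + (k * d + j)]? = some (decide (j / 2 ^ k % 2 = 0)) := by
  rw [autoCyclicVec, List.getElem?_append_right (by simp), List.length_replicate,
    Nat.add_sub_cancel_left, List.getElem?_flatMap_range_of_length_eq (by simp) hk hj]
  simp [hj]

def shiftRightPad (u : List Bool) (i : ℕ) : List Bool :=
  List.replicate i false ++ u.take (u.length - i)

theorem shiftRightPad_getElem?_of_lt {u : List Bool} {i p : ℕ} (hp : p < i) :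
    (shiftRightPad u i)[p]? = some false := by
  simp [shiftRightPad, List.getElem?_append_left, hp]

theorem shiftRightPad_getElem?_of_le {u : List Bool} {i p : ℕ} (hip : i ≤ p)
    (hp : p < u.length) : (shiftRightPad u i)[p]? = u[p - i]? := by
  rw [shiftRightPad, List.getElem?_append_right (by simpa using hip), List.length_replicate,
    List.getElem?_take_of_lt (by omega)]

theorem Nat.sub_mul_div_mod_two_ne {b m j : ℕ} (hb : 0 < b) (hm : Odd m) (h : b * m ≤ j) :
    (j - b * m) / b % 2 ≠ j / b % 2 := by
  have hdiv : (j - b * m) / b = j / b - m := Nat.sub_mul_div j b m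
  have hmj : m ≤ j / b := (Nat.le_div_iff_mul_le hb).mpr (by linarith)
  obtain ⟨t, rfl⟩ := hm
  omega

def autoCyclicMismatchSet (d k i : ℕ) : Finset ℕ :=
  range i ∪ (Ico i d).image fun j => d + (k * d + j)

theorem card_autoCyclicMismatchSet {d k i : ℕ} (h : i ≤ d) :
    #(autoCyclicMismatchSet d k i) = d := by
  have hdisj : Disjoint (range i) ((Ico i d).image fun j => d + (k * d + j)) := by
    simp only [disjoint_left, mem_range, mem_image, mem_Ico]
    omega
  rw [autoCyclicMismatchSet, card_union_of_disjoint hdisj, card_range,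
    card_image_of_injective _ fun a b hab => by omega, Nat.card_Ico]
  omega

theorem autoCyclicVec_mismatch_of_mem {d k m p : ℕ} (hm : Odd m) (hd : 2 ^ k * m ≤ d)
    (hp : p ∈ autoCyclicMismatchSet d k (2 ^ k * m)) :
    ∃ a, (autoCyclicVec d)[p]? = some a ∧
      (shiftRightPad (autoCyclicVec d) (2 ^ k * m))[p]? = some !a := by
  rcases mem_union.mp hp with hp | hp
  · rw [mem_range] at hp
    exact ⟨true, autoCyclicVec_getElem?_of_lt (by omega), shiftRightPad_getElem?_of_lt hp⟩
  simp only [mem_image, mem_Ico] at hp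
  obtain ⟨j, ⟨hij, hjd⟩, rfl⟩ := hp
  have hm1 : 1 ≤ m := hm.pos
  have hk : k < Nat.clog 2 d := (Nat.lt_clog_iff_pow_lt one_lt_two).mpr (by nlinarith)
  have hpL : d + (k * d + j) < (autoCyclicVec d).length := by
    rw [autoCyclicVec_length, autoCyclicLen]
    nlinarith
  refine ⟨_, autoCyclicVec_getElem?_block hk hjd, ?_⟩
  rw [shiftRightPad_getElem?_of_le (by omega) hpL,
    show d + (k * d + j) - 2 ^ k * m = d + (k * d + (j - 2 ^ k * m)) by omega,
    autoCyclicVec_getElem?_block hk (by omega)]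
  have := Nat.sub_mul_div_mod_two_ne (Nat.two_pow_pos k) hm hij
  simp only [Option.some.injEq, ← decide_not, decide_eq_decide]
  omega

theorem autoCyclicVec_is_auto_cyclic_general (d : ℕ) (i : ℕ) (h1 : 1 ≤ i) (h2 : i ≤ d) :
    d ≤ listHammingDist (autoCyclicVec d)
      (List.replicate i false ++ (autoCyclicVec d).take (autoCyclicLen d - i)) := by
  obtain ⟨k, m, hm, rfl⟩ := Nat.exists_eq_two_pow_mul_odd (n := i) (by omega)
  rw [← autoCyclicVec_length]
  change d ≤ listHammingDist _ (shiftRightPad (autoCyclicVec d) (2 ^ k * m))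
  calc d = #(autoCyclicMismatchSet d k (2 ^ k * m)) := (card_autoCyclicMismatchSet h2).symm
    _ ≤ _ := card_le_listHammingDist fun p hp => autoCyclicVec_mismatch_of_mem hm h2 hp

/-- `u` is a `d`-auto-cyclic vector: for every `1 ≤ i ≤ d`,
`d_H(u, 0^i u_1^{ℓ(d)−i}) ≥ d`. -/
theorem autoCyclicVec_is_auto_cyclic (d : ℕ) (hd : 1 ≤ d) (i : ℕ) (h1 : 1 ≤ i) (h2 : i ≤ d) :
    d ≤ listHammingDist (autoCyclicVec d)
      (List.replicate i false ++ (autoCyclicVec d).take (autoCyclicLen d - i)) :=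
  autoCyclicVec_is_auto_cyclic_general d i h1 h2
end

section
/- For n even and 1 ≤ k < n−2, the number of binary vectors of length n' = n−k−2 with Hamming weight n/2 − 2 that contain a zeros run of length at least k is at most (n'−k+1)·C(n'−k, n/2−2); hence the balanced MU code C_4(n,k) satisfies |C_4(n,k)| ≥ C(n', n/2−2) − (n'−k+1)·C(n'−k, n/2−2). -/
/-- `c : Fin m → Bool` contains a run of `k` consecutive zeros (`false`s). -/
def HasZeroRun (m k : ℕ) (c : Fin m → Bool) : Prop :=
  ∃ s : ℕ, s + k ≤ m ∧ ∀ j : Fin m, s ≤ j.val → j.val < s + k → c j = false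

/-- Hamming weight of a boolean vector. -/
def bweight {m : ℕ} (c : Fin m → Bool) : ℕ :=
  (Finset.univ.filter (fun i : Fin m => c i = true)).card

/-- Embedding of `Fin (m-k)` into `Fin m` skipping the window `[s, s+k)`. -/
def zrEmb (m k s : ℕ) (hs : s + k ≤ m) : Fin (m - k) → Fin m :=
  fun i => ⟨if i.val < s then i.val else i.val + k, by
    have h := i.2; split_ifs <;> omega⟩

lemma bweight_restrict (m k s : ℕ) (hs : s + k ≤ m) (c : Fin m → Bool)
    (hz : ∀ j : Fin m, s ≤ j.val → j.val < s + k → c j = false) :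
    bweight (fun i => c (zrEmb m k s hs i)) = bweight c := by
  unfold bweight
  apply Finset.card_bij (fun i _ => zrEmb m k s hs i)
  · intro a ha
    simp only [Finset.mem_filter, Finset.mem_univ, true_and] at ha ⊢
    exact ha
  · intro a₁ _ a₂ _ h
    apply Fin.ext
    have h' := congrArg Fin.val h
    simp only [zrEmb] at h'
    have h1 := a₁.2; have h2 := a₂.2
    split_ifs at h' <;> omega
  · intro j hj
    simp only [Finset.mem_filter, Finset.mem_univ, true_and] at hj
    have hnot : j.val < s ∨ s + k ≤ j.val := by
      by_contra hcon
      push_neg at hcon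
      have := hz j (by omega) (by omega)
      rw [this] at hj; exact Bool.false_ne_true hj
    rcases hnot with h | h
    · refine ⟨⟨j.val, by omega⟩, Finset.mem_filter.2 ⟨Finset.mem_univ _, ?_⟩, ?_⟩
      · have : zrEmb m k s hs ⟨j.val, by omega⟩ = j := by
          apply Fin.ext; simp [zrEmb, h]
        simpa only [this] using hj
      · apply Fin.ext; simp [zrEmb, h]
    · have hjlt := j.2
      refine ⟨⟨j.val - k, by omega⟩, Finset.mem_filter.2 ⟨Finset.mem_univ _, ?_⟩, ?_⟩
      · have : zrEmb m k s hs ⟨j.val - k, by omega⟩ = j := by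
          apply Fin.ext; simp only [zrEmb]
          have : ¬ (j.val - k < s) := by omega
          simp [this]; omega
        simpa only [this] using hj
      · apply Fin.ext; simp only [zrEmb]
        have : ¬ (j.val - k < s) := by omega
        simp [this]; omega

lemma card_bweight (m w : ℕ) :
    Nat.card {c : Fin m → Bool // bweight c = w} = m.choose w := by
  have e : {c : Fin m → Bool // bweight c = w} ≃ {S : Finset (Fin m) // S.card = w} :=
    { toFun := fun c => ⟨Finset.univ.filter (fun i => c.1 i = true), c.2⟩
      invFun := fun S => ⟨fun i => decide (i ∈ S.1), by
        simpa [bweight] using S.2⟩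
      left_inv := fun c => by
        apply Subtype.ext; funext i
        simp
      right_inv := fun S => by
        apply Subtype.ext
        ext i; simp }
  rw [Nat.card_congr e, Nat.card_eq_fintype_card, Fintype.card_finset_len,
    Fintype.card_fin]

lemma run_card_le (m k w : ℕ) (hk : 1 ≤ k) :
    Nat.card {c : Fin m → Bool // bweight c = w ∧ HasZeroRun m k c} ≤
      (m - k + 1) * (m - k).choose w := by
  classical
  by_cases hkm : k ≤ m
  · set T := Fin (m - k + 1) × {d : Fin (m - k) → Bool // bweight d = w} with hT
    have hcardT : Nat.card T = (m - k + 1) * (m - k).choose w := by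
      rw [hT, Nat.card_prod, Nat.card_eq_fintype_card (α := Fin (m - k + 1)),
        Fintype.card_fin, card_bweight]
    rw [← hcardT]
    set f : {c : Fin m → Bool // bweight c = w ∧ HasZeroRun m k c} → T :=
      fun c =>
        ⟨⟨Classical.choose c.2.2, by
            have := (Classical.choose_spec c.2.2).1; omega⟩,
         ⟨fun i => c.1 (zrEmb m k (Classical.choose c.2.2)
            (Classical.choose_spec c.2.2).1 i), by
            rw [bweight_restrict m k _ _ c.1 (Classical.choose_spec c.2.2).2]
            exact c.2.1⟩⟩ with hf
    apply Nat.card_le_card_of_injective f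
    intro c₁ c₂ h
    set s₁ := Classical.choose c₁.2.2 with hs₁
    set s₂ := Classical.choose c₂.2.2 with hs₂
    have hfst : s₁ = s₂ := by
      have := congrArg (fun x : T => (x.1 : ℕ)) h
      simpa [hf] using this
    have hsnd : ∀ i : Fin (m - k),
        c₁.1 (zrEmb m k s₁ (Classical.choose_spec c₁.2.2).1 i) =
        c₂.1 (zrEmb m k s₂ (Classical.choose_spec c₂.2.2).1 i) := by
      intro i
      have := congrArg (fun x : T => x.2.1 i) h
      simpa [hf] using this
    have hz₁ := (Classical.choose_spec c₁.2.2).2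
    have hz₂ := (Classical.choose_spec c₂.2.2).2
    apply Subtype.ext
    funext j
    by_cases h1 : j.val < s₁
    · have hs1le : s₁ + k ≤ m := (Classical.choose_spec c₁.2.2).1
      have := hsnd ⟨j.val, by omega⟩
      have e1 : zrEmb m k s₁ (Classical.choose_spec c₁.2.2).1 ⟨j.val, by omega⟩ = j := by
        apply Fin.ext; simp [zrEmb, h1]
      have e2 : zrEmb m k s₂ (Classical.choose_spec c₂.2.2).1 ⟨j.val, by omega⟩ = j := by
        apply Fin.ext; simp [zrEmb, ← hfst, h1]
      rw [e1, e2] at this; exact this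
    · by_cases h2 : j.val < s₁ + k
      · rw [hz₁ j (by omega) h2, hz₂ j (by omega) (by omega)]
      · have hjlt := j.2
        have := hsnd ⟨j.val - k, by omega⟩
        have hnlt : ¬ (j.val - k < s₁) := by omega
        have e1 : zrEmb m k s₁ (Classical.choose_spec c₁.2.2).1 ⟨j.val - k, by omega⟩ = j := by
          apply Fin.ext; simp only [zrEmb]; simp [hnlt]; omega
        have e2 : zrEmb m k s₂ (Classical.choose_spec c₂.2.2).1 ⟨j.val - k, by omega⟩ = j := by
          apply Fin.ext; simp only [zrEmb]; rw [← hfst]; simp [hnlt]; omega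
        rw [e1, e2] at this; exact this
  · have : IsEmpty {c : Fin m → Bool // bweight c = w ∧ HasZeroRun m k c} := by
      constructor
      rintro ⟨c, -, s, hs, -⟩
      omega
    simp [Nat.card_of_isEmpty]

/-- with `n' = n−k−2`, the number of weight-`(n/2−2)` binary vectors of
length `n'` containing a zeros run of length at least `k` is at most
`(n'−k+1)·C(n'−k, n/2−2)`; hence `|C_4(n,k)| ≥ C(n', n/2−2) − (n'−k+1)·C(n'−k, n/2−2)`. -/
theorem balanced_MU_construction_bound (n k : ℕ) (hne : Even n) (hk : 1 ≤ k)
    (hkn : k < n - 2) :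
    Nat.card {c : Fin (n - k - 2) → Bool //
        bweight c = n / 2 - 2 ∧ HasZeroRun (n - k - 2) k c} ≤
      (n - k - 2 - k + 1) * (n - k - 2 - k).choose (n / 2 - 2) ∧
    (n - k - 2).choose (n / 2 - 2) - (n - k - 2 - k + 1) * (n - k - 2 - k).choose (n / 2 - 2) ≤
      Nat.card {c : Fin (n - k - 2) → Bool //
        bweight c = n / 2 - 2 ∧ ¬ HasZeroRun (n - k - 2) k c} := by
  classical
  set m := n - k - 2
  set w := n / 2 - 2
  have h1 : Nat.card {c : Fin m → Bool // bweight c = w ∧ HasZeroRun m k c} ≤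
      (m - k + 1) * (m - k).choose w := run_card_le m k w hk
  refine ⟨h1, ?_⟩
  have hsplit :
      Nat.card {c : Fin m → Bool // bweight c = w ∧ HasZeroRun m k c} +
      Nat.card {c : Fin m → Bool // bweight c = w ∧ ¬ HasZeroRun m k c} = m.choose w := by
    rw [← card_bweight m w, ← Nat.card_sum]
    apply Nat.card_congr
    exact (Equiv.sumCongr
      (Equiv.subtypeSubtypeEquivSubtypeInter (fun c => bweight c = w)
        (fun c => HasZeroRun m k c)).symm
      (Equiv.subtypeSubtypeEquivSubtypeInter (fun c => bweight c = w)
        (fun c => ¬ HasZeroRun m k c)).symm).trans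
      (Equiv.sumCompl fun x : {c : Fin m → Bool // bweight c = w} => HasZeroRun m k x.1)
  omega
end
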